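/- arXiv:0901.3989 — 4 statements merged into one kernel-verified Lean document; each statement's English description precedes it below -/
import Mathlib

section
/- If u(x,t) = t^{-1/5} f(x t^{-1/5}) with f(y) = (1/120)(y₀² − y²)² extended by 0 for |y| ≥ y₀, then u is a weak solution of u_t = −(u u_{xxx})_x on the region where |x| < y₀ t^{1/5}, t > 0; i.e., on that region the pointwise identity ∂_t u + ∂_x(u ∂_x³ u) = 0 holds. -/
/-!
Inside the region the argument y = x t^{-1/5} stays strictly below the cutoff y₀, so near each of
its points u coincides with t^{-1/5} g(x t^{-1/5}) for the polynomial g(y) = (y₀² - y²)²/120.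
For any smooth g, scaling turns u_t + (u u_xxx)_x into t^{-6/5} ((g g''')' - (y g)'/5) at that y.
Here g''' = y/5, so g g''' = y g / 5 identically and the bracket vanishes.
-/

open Real Filter Topology Function

noncomputable def thinFilmResidual (u : ℝ → ℝ → ℝ) (x t : ℝ) : ℝ :=
  deriv (fun τ => u x τ) t + deriv (fun ξ => u ξ t * iteratedDeriv 3 (fun ξ' => u ξ' t) ξ) x

theorem thinFilmResidual_congr {u v : ℝ → ℝ → ℝ} {x t : ℝ}
    (h : uncurry u =ᶠ[𝓝 (x, t)] uncurry v) : thinFilmResidual u x t = thinFilmResidual v x t := by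
  have htime : (fun τ => u x τ) =ᶠ[𝓝 t] fun τ => v x τ :=
    (continuous_const.prodMk continuous_id).continuousAt.eventually h
  have hspace : (fun ξ => u ξ t) =ᶠ[𝓝 x] fun ξ => v ξ t :=
    (continuous_id.prodMk continuous_const).continuousAt.eventually h
  have hflux : (fun ξ => u ξ t * iteratedDeriv 3 (fun ξ' => u ξ' t) ξ)
      =ᶠ[𝓝 x] fun ξ => v ξ t * iteratedDeriv 3 (fun ξ' => v ξ' t) ξ :=
    hspace.mul (hspace.iteratedDeriv 3)
  rw [thinFilmResidual, thinFilmResidual, htime.deriv_eq, hflux.deriv_eq]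

noncomputable def selfSimilar (g : ℝ → ℝ) (x t : ℝ) : ℝ :=
  t ^ (-(1:ℝ)/5) * g (x * t ^ (-(1:ℝ)/5))

theorem rpow_neg_one_fifth_sub_one {t : ℝ} (ht : 0 < t) :
    t ^ (-(1:ℝ)/5 - 1) = (t ^ (-(1:ℝ)/5)) ^ 6 := by
  rw [← rpow_natCast, ← rpow_mul ht.le]
  norm_num

theorem hasDerivAt_selfSimilar_time {g : ℝ → ℝ} (hg : Differentiable ℝ g) (x : ℝ) {t : ℝ}
    (ht : 0 < t) :
    HasDerivAt (fun τ => selfSimilar g x τ)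
      (-(t ^ (-(1:ℝ)/5)) ^ 6 / 5 * deriv (fun y => y * g y) (x * t ^ (-(1:ℝ)/5))) t := by
  have hpow := hasDerivAt_rpow_const (p := -(1:ℝ)/5) (Or.inl ht.ne')
  have hcomp := (hg _).hasDerivAt.comp t (hpow.const_mul x)
  have hprod : deriv (fun y => y * g y) (x * t ^ (-(1:ℝ)/5))
      = 1 * g (x * t ^ (-(1:ℝ)/5)) + x * t ^ (-(1:ℝ)/5) * deriv g (x * t ^ (-(1:ℝ)/5)) :=
    ((hasDerivAt_id' _).mul (hg _).hasDerivAt).deriv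
  rw [hprod]
  refine (hpow.mul hcomp).congr_deriv ?_
  rw [rpow_neg_one_fifth_sub_one ht, comp_apply]
  ring

theorem selfSimilar_eq_mul_comp_mul (g : ℝ → ℝ) (t : ℝ) :
    (fun ξ => selfSimilar g ξ t) = fun ξ => t ^ (-(1:ℝ)/5) * g (t ^ (-(1:ℝ)/5) * ξ) := by
  simp only [selfSimilar, mul_comm _ (t ^ (-(1:ℝ)/5))]

theorem iteratedDeriv_selfSimilar_space {g : ℝ → ℝ} {n : ℕ} (hg : ContDiff ℝ n g) (t : ℝ) :
    iteratedDeriv n (fun ξ => selfSimilar g ξ t)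
      = fun ξ => (t ^ (-(1:ℝ)/5)) ^ (n + 1) * iteratedDeriv n g (t ^ (-(1:ℝ)/5) * ξ) := by
  funext ξ
  rw [selfSimilar_eq_mul_comp_mul, iteratedDeriv_const_mul_field,
    iteratedDeriv_comp_const_mul hg, pow_succ]
  ring

theorem thinFilmResidual_selfSimilar {g : ℝ → ℝ} (hg : ContDiff ℝ 4 g) (x : ℝ) {t : ℝ}
    (ht : 0 < t) :
    thinFilmResidual (selfSimilar g) x t = (t ^ (-(1:ℝ)/5)) ^ 6 *
      (deriv (fun y => g y * iteratedDeriv 3 g y) (x * t ^ (-(1:ℝ)/5))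
        - deriv (fun y => y * g y) (x * t ^ (-(1:ℝ)/5)) / 5) := by
  set c := t ^ (-(1:ℝ)/5)
  have hflux : (fun ξ => selfSimilar g ξ t * iteratedDeriv 3 (fun ξ' => selfSimilar g ξ' t) ξ)
      = fun ξ => c ^ 5 * (fun y => g y * iteratedDeriv 3 g y) (c * ξ) := by
    rw [iteratedDeriv_selfSimilar_space (hg.of_le (by norm_num))]
    funext ξ
    rw [selfSimilar, mul_comm ξ]
    ring
  have htime := hasDerivAt_selfSimilar_time (hg.differentiable (by norm_num)) x ht
  rw [thinFilmResidual, htime.deriv, hflux, deriv_const_mul_field,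
    deriv_comp_mul_left c (fun y => g y * iteratedDeriv 3 g y), smul_eq_mul, mul_comm c x]
  ring

noncomputable def thinFilmProfile (y₀ y : ℝ) : ℝ := (y₀ ^ 2 - y ^ 2) ^ 2 / 120

theorem contDiff_thinFilmProfile (y₀ : ℝ) {n : WithTop ℕ∞} :
    ContDiff ℝ n (thinFilmProfile y₀) := by
  unfold thinFilmProfile
  fun_prop

theorem iteratedDeriv_three_thinFilmProfile (y₀ : ℝ) :
    iteratedDeriv 3 (thinFilmProfile y₀) = fun y => y / 5 := by
  have h1 : deriv (thinFilmProfile y₀) = fun y => (y ^ 3 - y₀ ^ 2 * y) / 30 := by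
    funext y
    unfold thinFilmProfile
    simp only [deriv_div_const, differentiableAt_const, DifferentiableAt.fun_sub_iff_right,
      differentiableAt_fun_id, DifferentiableAt.fun_pow, deriv_fun_pow, Nat.cast_ofNat,
      Nat.add_one_sub_one, pow_one, deriv_fun_sub, deriv_const', mul_zero, deriv_id'', mul_one,
      zero_sub, mul_neg]
    ring
  have h2 : deriv (fun y : ℝ => (y ^ 3 - y₀ ^ 2 * y) / 30)
      = fun y => (3 * y ^ 2 - y₀ ^ 2) / 30 := by
    funext y
    rw [deriv_div_const, deriv_fun_sub (by fun_prop) (by fun_prop)]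
    simp
  have h3 : deriv (fun y : ℝ => (3 * y ^ 2 - y₀ ^ 2) / 30) = fun y => y / 5 := by
    funext y
    simp
    ring
  rw [iteratedDeriv_succ, iteratedDeriv_succ, iteratedDeriv_one, h1, h2, h3]

theorem thinFilmResidual_selfSimilar_thinFilmProfile (y₀ x : ℝ) {t : ℝ} (ht : 0 < t) :
    thinFilmResidual (selfSimilar (thinFilmProfile y₀)) x t = 0 := by
  have hode : (fun y => thinFilmProfile y₀ y * iteratedDeriv 3 (thinFilmProfile y₀) y)
      = fun y => y * thinFilmProfile y₀ y / 5 := by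
    rw [iteratedDeriv_three_thinFilmProfile]
    funext y
    ring
  rw [thinFilmResidual_selfSimilar (contDiff_thinFilmProfile y₀) x ht, hode, deriv_div_const,
    sub_self, mul_zero]

theorem abs_mul_rpow_neg_one_fifth_lt {x t y₀ : ℝ} (ht : 0 < t)
    (hx : |x| < y₀ * t ^ ((1:ℝ)/5)) : |x * t ^ (-(1:ℝ)/5)| < y₀ := by
  have hs : 0 < t ^ ((1:ℝ)/5) := rpow_pos_of_pos ht _
  rw [neg_div, rpow_neg ht.le, abs_mul, abs_inv, abs_of_pos hs, ← div_eq_mul_inv]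
  exact (div_lt_iff₀ hs).2 hx

theorem eventually_pos_and_abs_lt_mul_rpow_one_fifth {x t y₀ : ℝ} (ht : 0 < t)
    (hx : |x| < y₀ * t ^ ((1:ℝ)/5)) :
    ∀ᶠ p : ℝ × ℝ in 𝓝 (x, t), 0 < p.2 ∧ |p.1| < y₀ * p.2 ^ ((1:ℝ)/5) :=
  (continuousAt_const.eventually_lt continuous_snd.continuousAt ht).and
    ((continuous_abs.comp continuous_fst).continuousAt.eventually_lt
      (continuous_const.mul ((continuous_rpow_const (by norm_num)).comp continuous_snd)).continuousAt
      hx)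

theorem stmt_2_general (y₀ : ℝ) (f : ℝ → ℝ)
    (hf : ∀ y, f y = if |y| ≤ y₀ then (1/120) * (y₀^2 - y^2)^2 else 0)
    (u : ℝ → ℝ → ℝ)
    (hu : ∀ x t, u x t = t ^ (-(1:ℝ)/5) * f (x * t ^ (-(1:ℝ)/5))) :
    ∀ x t : ℝ, 0 < t → |x| < y₀ * t ^ ((1:ℝ)/5) →
      deriv (fun τ => u x τ) t
        + deriv (fun ξ => u ξ t * iteratedDeriv 3 (fun ξ' => u ξ' t) ξ) x = 0 := by
  intro x t ht hx
  have hlocal : uncurry u =ᶠ[𝓝 (x, t)] uncurry (selfSimilar (thinFilmProfile y₀)) := by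
    filter_upwards [eventually_pos_and_abs_lt_mul_rpow_one_fifth ht hx] with p ⟨hp, hpx⟩
    rw [uncurry_apply_pair, uncurry_apply_pair, hu, hf,
      if_pos (abs_mul_rpow_neg_one_fifth_lt hp hpx).le, selfSimilar, thinFilmProfile]
    ring
  calc _ = thinFilmResidual u x t := rfl
    _ = thinFilmResidual (selfSimilar (thinFilmProfile y₀)) x t := thinFilmResidual_congr hlocal
    _ = 0 := thinFilmResidual_selfSimilar_thinFilmProfile y₀ x ht

/-- The self-similar function u(x,t) = t^{-1/5} f(x t^{-1/5}), with
f(y) = (1/120)(y₀²−y²)² extended by zero, satisfies the thin film equation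
u_t + (u u_{xxx})_x = 0 pointwise on {(x,t) : t > 0, |x| < y₀ t^{1/5}}. -/
theorem stmt_2 (y₀ : ℝ) (hy₀ : 0 < y₀) (f : ℝ → ℝ)
    (hf : ∀ y, f y = if |y| ≤ y₀ then (1/120) * (y₀^2 - y^2)^2 else 0)
    (u : ℝ → ℝ → ℝ)
    (hu : ∀ x t, u x t = t ^ (-(1:ℝ)/5) * f (x * t ^ (-(1:ℝ)/5))) :
    ∀ x t : ℝ, 0 < t → |x| < y₀ * t ^ ((1:ℝ)/5) →
      deriv (fun τ => u x τ) t
        + deriv (fun ξ => u ξ t * iteratedDeriv 3 (fun ξ' => u ξ' t) ξ) x = 0 :=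
  stmt_2_general y₀ f hf u hu
end

section
/- Any C³ solution φ on [s₀, ∞) of φ''' + 6φ'' + 11φ' + 6φ = −λ₀ with λ₀ > 0 and φ(s) > 0 for all s ≥ s₀ converges to −λ₀/6 < 0 as s → ∞; consequently no solution of the discontinuous ODE φ''' + 6φ'' + 11φ' + 6φ = −λ₀ sign(φ) can be eventually strictly positive, i.e., every globally defined bounded solution that is not eventually constant is oscillatory (has zeros in every neighbourhood of +∞). -/
/-!
The operator factors as `P₃ = (D + 1)(D + 2)(D + 3)`. For `a > 0`, the integrating factor
`exp (a * s)` turns a one-sided bound on `f' + a f` into the corresponding bound on `f` up to an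
exponentially decaying error, so `f' + a f → c` forces `f → c / a`; three applications give
`φ → c / 6` whenever `P₃ φ → c`. A solution of the sign equation of eventually constant sign
would therefore converge to `∓λ₀ / 6`, a limit of the opposite sign, so by the intermediate value
theorem it vanishes in every neighbourhood of `+∞`.
-/

open Filter Real Set Topology

theorem antitoneOn_exp_mul_mul_sub_div {f f' : ℝ → ℝ} {a b s₀ : ℝ} (ha : a ≠ 0)
    (hf : ∀ x ≥ s₀, HasDerivAt f (f' x) x) (hb : ∀ x ≥ s₀, f' x + a * f x ≤ b) :
    AntitoneOn (fun x => exp (a * x) * (f x - b / a)) (Ici s₀) := by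
  have hg : ∀ x ≥ s₀, HasDerivAt (fun x => exp (a * x) * (f x - b / a))
      (exp (a * x) * (f' x + a * f x - b)) x := fun x hx => by
    have he : HasDerivAt (fun x => exp (a * x)) (exp (a * x) * a) x := by
      simpa using ((hasDerivAt_id x).const_mul a).exp
    refine (he.mul ((hf x hx).sub_const (b / a))).congr_deriv ?_
    linear_combination -exp (a * x) * mul_div_cancel₀ b ha
  refine antitoneOn_of_hasDerivWithinAt_nonpos (f' := fun x => exp (a * x) * (f' x + a * f x - b))
    (convex_Ici s₀)
    (fun x hx => (hg x hx).continuousAt.continuousWithinAt) (fun x hx => ?_) (fun x hx => ?_)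
  · rw [interior_Ici] at hx
    exact (hg x (le_of_lt hx)).hasDerivWithinAt
  · rw [interior_Ici] at hx
    exact mul_nonpos_of_nonneg_of_nonpos (exp_pos _).le (by linarith [hb x (le_of_lt hx)])

theorem eventually_lt_of_deriv_add_mul_le {f f' : ℝ → ℝ} {a b u : ℝ} (ha : 0 < a)
    (hf : ∀ᶠ x in atTop, HasDerivAt f (f' x) x) (hb : ∀ᶠ x in atTop, f' x + a * f x ≤ b)
    (hu : b / a < u) : ∀ᶠ x in atTop, f x < u := by
  obtain ⟨s₀, hs₀⟩ := eventually_atTop.1 (hf.and hb)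
  have hanti := antitoneOn_exp_mul_mul_sub_div ha.ne' (fun x hx => (hs₀ x hx).1)
    (fun x hx => (hs₀ x hx).2)
  set C := exp (a * s₀) * (f s₀ - b / a)
  have hbound : ∀ x ≥ s₀, f x ≤ b / a + C * exp (-(a * x)) := fun x hx => by
    have hinv : exp (-(a * x)) * exp (a * x) = 1 := by rw [← exp_add]; simp
    calc f x = b / a + exp (-(a * x)) * (exp (a * x) * (f x - b / a)) := by
          linear_combination (f x - b / a) * hinv.symm
      _ ≤ b / a + exp (-(a * x)) * C := by
          gcongr
          exact hanti self_mem_Ici hx hx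
      _ = b / a + C * exp (-(a * x)) := by ring
  have hlim : Tendsto (fun x => b / a + C * exp (-(a * x))) atTop (𝓝 (b / a + C * 0)) :=
    tendsto_const_nhds.add ((tendsto_exp_atBot.comp
      (tendsto_neg_atTop_atBot.comp (tendsto_id.const_mul_atTop ha))).const_mul C)
  rw [mul_zero, add_zero] at hlim
  filter_upwards [eventually_ge_atTop s₀, hlim.eventually (eventually_lt_nhds hu)]
    with x hx hxu using (hbound x hx).trans_lt hxu

theorem eventually_lt_of_tendsto_deriv_add_mul {f f' : ℝ → ℝ} {a c u : ℝ} (ha : 0 < a)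
    (hf : ∀ᶠ x in atTop, HasDerivAt f (f' x) x)
    (h : Tendsto (fun x => f' x + a * f x) atTop (𝓝 c)) (hu : c / a < u) :
    ∀ᶠ x in atTop, f x < u := by
  obtain ⟨b, hcb, hbu⟩ := exists_between ((div_lt_iff₀' ha).1 hu)
  exact eventually_lt_of_deriv_add_mul_le ha hf (h.eventually (eventually_le_nhds hcb))
    ((div_lt_iff₀' ha).2 hbu)

theorem tendsto_of_tendsto_deriv_add_mul {f f' : ℝ → ℝ} {a c : ℝ} (ha : 0 < a)
    (hf : ∀ᶠ x in atTop, HasDerivAt f (f' x) x)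
    (h : Tendsto (fun x => f' x + a * f x) atTop (𝓝 c)) : Tendsto f atTop (𝓝 (c / a)) := by
  refine tendsto_order.2 ⟨fun l hl => ?_, fun _ => eventually_lt_of_tendsto_deriv_add_mul ha hf h⟩
  have hneg : Tendsto (fun x => -f' x + a * -f x) atTop (𝓝 (-c)) := by
    simpa only [neg_add, mul_neg] using h.neg
  have hl' : -c / a < -l := by rw [neg_div]; exact neg_lt_neg hl
  filter_upwards [eventually_lt_of_tendsto_deriv_add_mul ha (hf.mono fun x hx => hx.neg) hneg hl']
    with x hx using neg_lt_neg_iff.1 hx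

theorem IsPreconnected.forall_lt_or_forall_gt {X α : Type*} [TopologicalSpace X]
    [LinearOrder α] [TopologicalSpace α] [OrderClosedTopology α] {s : Set X}
    (hs : IsPreconnected s) {f : X → α} (hf : ContinuousOn f s) {c : α} (hc : ∀ x ∈ s, f x ≠ c) :
    (∀ x ∈ s, c < f x) ∨ (∀ x ∈ s, f x < c) := by
  by_contra! ⟨⟨a, ha, hfa⟩, ⟨b, hb, hfb⟩⟩
  obtain ⟨x, hx, hfx⟩ := hs.intermediate_value ha hb hf ⟨hfa, hfb⟩
  exact hc x hx hfx

theorem tendsto_of_tendsto_cubic_ode {φ : ℝ → ℝ} {c : ℝ} (hφ : ContDiff ℝ 3 φ)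
    (h : Tendsto (fun s => iteratedDeriv 3 φ s + 6 * iteratedDeriv 2 φ s
      + 11 * deriv φ s + 6 * φ s) atTop (𝓝 c)) :
    Tendsto φ atTop (𝓝 (c / 6)) := by
  have hD : ∀ k < 3, ∀ x, HasDerivAt (iteratedDeriv k φ) (iteratedDeriv (k + 1) φ x) x :=
    fun k hk x => by
      rw [iteratedDeriv_succ]
      exact (hφ.differentiable_iteratedDeriv k (by exact_mod_cast hk) x).hasDerivAt
  have hD0 : ∀ x, HasDerivAt φ (deriv φ x) x := by simpa using hD 0 (by norm_num)
  have hD1 : ∀ x, HasDerivAt (deriv φ) (iteratedDeriv 2 φ x) x := by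
    simpa using hD 1 (by norm_num)
  have hD2 := hD 2 (by norm_num)
  have hw : Tendsto (fun s => iteratedDeriv 2 φ s + 5 * deriv φ s + 6 * φ s) atTop
      (𝓝 (c / 1)) :=
    tendsto_of_tendsto_deriv_add_mul one_pos
      (.of_forall fun x => ((hD2 x).add ((hD1 x).const_mul 5)).add ((hD0 x).const_mul 6))
      (h.congr fun s => by ring)
  have hv : Tendsto (fun s => deriv φ s + 3 * φ s) atTop (𝓝 (c / 1 / 2)) :=
    tendsto_of_tendsto_deriv_add_mul two_pos
      (.of_forall fun x => (hD1 x).add ((hD0 x).const_mul 3)) (hw.congr fun s => by ring)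
  have := tendsto_of_tendsto_deriv_add_mul three_pos (.of_forall hD0) hv
  rwa [div_div, div_one, show (2 : ℝ) * 3 = 6 by norm_num] at this

/-- (i) Any C³ solution of φ''' + 6φ'' + 11φ' + 6φ = −lam0 (lam0 > 0) which is positive
on [s₀, ∞) converges to −lam0/6 < 0 at +∞; (ii) consequently every solution of the
discontinuous ODE φ''' + 6φ'' + 11φ' + 6φ = −lam0 sign(φ) is oscillatory: it has zeros
in every neighbourhood of +∞ (in particular it cannot be eventually strictly positive). -/
theorem stmt_10 (lam0 : ℝ) (hlam0 : 0 < lam0) (φ : ℝ → ℝ) (hreg : ContDiff ℝ 3 φ) :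
    ((∀ s₀ : ℝ,
      (∀ s ≥ s₀, iteratedDeriv 3 φ s + 6 * iteratedDeriv 2 φ s
        + 11 * deriv φ s + 6 * φ s = -lam0) →
      (∀ s ≥ s₀, 0 < φ s) →
      Filter.Tendsto φ Filter.atTop (nhds (-lam0/6)) ∧ -lam0/6 < 0)) ∧
    ((∀ s : ℝ, iteratedDeriv 3 φ s + 6 * iteratedDeriv 2 φ s
        + 11 * deriv φ s + 6 * φ s = -lam0 * Real.sign (φ s)) →
      (¬ ∃ s₀ : ℝ, ∀ s ≥ s₀, 0 < φ s) ∧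
      (∀ s₀ : ℝ, ∃ s ≥ s₀, φ s = 0)) := by
  have hlim : ∀ c s₀, (∀ s ≥ s₀, iteratedDeriv 3 φ s + 6 * iteratedDeriv 2 φ s
      + 11 * deriv φ s + 6 * φ s = c) → Tendsto φ atTop (𝓝 (c / 6)) := fun c s₀ hode =>
    tendsto_of_tendsto_cubic_ode hreg
      (tendsto_const_nhds.congr' (eventually_atTop.2 ⟨s₀, fun s hs => (hode s hs).symm⟩))
  refine ⟨fun s₀ hode _ => ⟨hlim _ s₀ hode, by linarith⟩, fun hsign => ?_⟩
  have not_pos : ¬ ∃ s₀, ∀ s ≥ s₀, 0 < φ s := fun ⟨s₀, hpos⟩ => by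
    have := ge_of_tendsto
      (hlim (-lam0) s₀ fun s hs => by rw [hsign, sign_of_pos (hpos s hs), mul_one])
      (eventually_atTop.2 ⟨s₀, fun s hs => (hpos s hs).le⟩)
    linarith
  have not_neg : ¬ ∃ s₀, ∀ s ≥ s₀, φ s < 0 := fun ⟨s₀, hneg⟩ => by
    have := le_of_tendsto (hlim lam0 s₀ fun s hs => by rw [hsign, sign_of_neg (hneg s hs)]; ring)
      (eventually_atTop.2 ⟨s₀, fun s hs => (hneg s hs).le⟩)
    linarith
  refine ⟨not_pos, fun s₀ => ?_⟩
  by_contra! hzero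
  rcases isPreconnected_Ici.forall_lt_or_forall_gt hreg.continuous.continuousOn hzero with
    hpos | hneg
  exacts [not_pos ⟨s₀, hpos⟩, not_neg ⟨s₀, hneg⟩]
end

section
/- Let F ∈ Schwartz class (or F with |F(y)| ≤ D e^{−d|y|^{4/3}}) satisfy −F⁗ + (1/4)(yF)' = 0 on ℝ with ∫_ℝ F = 1 (equivalently −F⁗ + (1/4) y F' + (1/4)F = 0). Then for each l ≥ 0, the l-th derivative ψ_l = ((−1)^l/√(l!)) F^{(l)} satisfies B ψ_l = −(l/4) ψ_l, where B u = −u⁗ + (1/4) y u' + (1/4) u. -/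
open MeasureTheory

lemma contDiff_iteratedDeriv_inf (f : ℝ → ℝ) (hf : ContDiff ℝ (⊤ : ℕ∞) f) (n : ℕ) :
    ContDiff ℝ (⊤ : ℕ∞) (iteratedDeriv n f) := by
  rw [iteratedDeriv_eq_iterate]; exact hf.iterate_deriv n

lemma diff_of_inf (f : ℝ → ℝ) (hf : ContDiff ℝ (⊤ : ℕ∞) f) : Differentiable ℝ f :=
  hf.differentiable (by simp)

lemma itd_const_mul (c : ℝ) (f : ℝ → ℝ) (hf : ContDiff ℝ (⊤ : ℕ∞) f) (n : ℕ) :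
    iteratedDeriv n (fun x => c * f x) = fun x => c * iteratedDeriv n f x := by
  induction n with
  | zero => simp
  | succ n ih =>
    rw [iteratedDeriv_succ, ih]
    funext x
    rw [deriv_const_mul _ (diff_of_inf _ (contDiff_iteratedDeriv_inf f hf n) x),
      iteratedDeriv_succ]

lemma key (F : ℝ → ℝ) (hreg : ContDiff ℝ (⊤ : ℕ∞) F)
    (hBF : ∀ y : ℝ, -(iteratedDeriv 4 F y) + (1/4) * y * deriv F y + (1/4) * F y = 0) :
    ∀ l : ℕ, ∀ y : ℝ,
      -(iteratedDeriv 4 (iteratedDeriv l F) y)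
        + (1/4) * y * deriv (iteratedDeriv l F) y
        + (1/4) * iteratedDeriv l F y = -((l:ℝ)/4) * iteratedDeriv l F y := by
  intro l
  induction l with
  | zero => intro y; simpa [iteratedDeriv_zero] using hBF y
  | succ l ih =>
    intro y
    set g := iteratedDeriv l F with hg
    have hgs : ContDiff ℝ (⊤ : ℕ∞) g := contDiff_iteratedDeriv_inf F hreg l
    have hdg : ∀ n : ℕ, ∀ x : ℝ, HasDerivAt (iteratedDeriv n g) (iteratedDeriv (n+1) g x) x := by
      intro n x
      have := (diff_of_inf _ (contDiff_iteratedDeriv_inf g hgs n) x).hasDerivAt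
      rwa [← iteratedDeriv_succ] at this
    have hzero : ∀ x : ℝ, -(iteratedDeriv 4 g x) + (1/4) * x * iteratedDeriv 1 g x
        + (1/4) * g x + ((l:ℝ)/4) * g x = 0 := by
      intro x
      have h := ih x
      rw [← iteratedDeriv_one] at h
      linarith
    have hD : ∀ x : ℝ, HasDerivAt
        (fun x => -(iteratedDeriv 4 g x) + (1/4) * x * iteratedDeriv 1 g x
          + (1/4) * g x + ((l:ℝ)/4) * g x)
        (-(iteratedDeriv 5 g x) + ((1/4) * iteratedDeriv 1 g x + (1/4) * x * iteratedDeriv 2 g x)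
          + (1/4) * iteratedDeriv 1 g x + ((l:ℝ)/4) * iteratedDeriv 1 g x) x := by
      intro x
      have h4 := (hdg 4 x).neg
      have h1 : HasDerivAt (fun x => (1/4) * x * iteratedDeriv 1 g x)
          ((1/4) * iteratedDeriv 1 g x + (1/4) * x * iteratedDeriv 2 g x) x := by
        have : HasDerivAt (fun y => (1/4:ℝ) * id y * iteratedDeriv 1 g y)
            ((1/4:ℝ) * 1 * iteratedDeriv 1 g x + (1/4:ℝ) * x * iteratedDeriv (1+1) g x) x :=
          (((hasDerivAt_id x).const_mul (1/4:ℝ)).mul (hdg 1 x))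
        convert this using 1
        simp only [id_eq, show (1:ℕ)+1 = 2 from rfl]
        ring
      have h0 : HasDerivAt (fun x => (1/4) * g x) ((1/4) * deriv g x) x :=
        ((diff_of_inf _ hgs x).hasDerivAt).const_mul (1/4:ℝ)
      have h0' : HasDerivAt (fun x => ((l:ℝ)/4) * g x) (((l:ℝ)/4) * deriv g x) x :=
        ((diff_of_inf _ hgs x).hasDerivAt).const_mul _
      have hde : deriv g x = iteratedDeriv 1 g x := by rw [iteratedDeriv_one]
      rw [hde] at h0 h0'
      exact ((h4.add h1).add h0).add h0'
    have hDzero : ∀ x : ℝ,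
        -(iteratedDeriv 5 g x) + ((1/4) * iteratedDeriv 1 g x + (1/4) * x * iteratedDeriv 2 g x)
          + (1/4) * iteratedDeriv 1 g x + ((l:ℝ)/4) * iteratedDeriv 1 g x = 0 := by
      intro x
      have hfun : (fun x => -(iteratedDeriv 4 g x) + (1/4) * x * iteratedDeriv 1 g x
          + (1/4) * g x + ((l:ℝ)/4) * g x) = fun _ => (0:ℝ) := funext hzero
      have hder := (hD x).deriv
      rw [hfun, deriv_const] at hder
      linarith [hder]
    have e1 : iteratedDeriv (l+1) F = deriv g := by rw [iteratedDeriv_succ]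
    have e3 : iteratedDeriv 4 (deriv g) = iteratedDeriv 5 g :=
      (iteratedDeriv_succ' (n := 4) (f := g)).symm
    have e4 : deriv (deriv g) = iteratedDeriv 2 g := by
      rw [iteratedDeriv_succ (n := 1), iteratedDeriv_one]
    have e2 : deriv g = iteratedDeriv 1 g := iteratedDeriv_one.symm
    rw [e1, e3, e4, e2]
    have := hDzero y
    push_cast
    linarith

/-- If F is smooth with fast decay, B F = 0 where B u = −u⁗ + (1/4) y u' + (1/4) u,
and ∫F = 1, then ψ_l = ((−1)^l/√(l!)) F^{(l)} satisfies B ψ_l = −(l/4) ψ_l. -/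
theorem stmt_13 (F : ℝ → ℝ) (D d : ℝ) (hD : 0 < D) (hd : 0 < d)
    (hreg : ContDiff ℝ (⊤ : ℕ∞) F)
    (hdecay : ∀ y : ℝ, |F y| ≤ D * Real.exp (-d * |y| ^ ((4:ℝ)/3)))
    (hint : Integrable F) (hmass : ∫ y, F y = 1)
    (hBF : ∀ y : ℝ, -(iteratedDeriv 4 F y) + (1/4) * y * deriv F y + (1/4) * F y = 0) :
    ∀ l : ℕ, ∀ ψ : ℝ → ℝ,
      (∀ y, ψ y = ((-1)^l / Real.sqrt (Nat.factorial l)) * iteratedDeriv l F y) →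
      ∀ y : ℝ,
        -(iteratedDeriv 4 ψ y) + (1/4) * y * deriv ψ y + (1/4) * ψ y
          = -((l : ℝ)/4) * ψ y := by
  have hF : ContDiff ℝ (⊤ : ℕ∞) F := hreg.of_le (by simp)
  intro l ψ hψ y
  set c : ℝ := (-1)^l / Real.sqrt (Nat.factorial l) with hc
  have hψf : ψ = fun y => c * iteratedDeriv l F y := funext hψ
  have hgs : ContDiff ℝ (⊤ : ℕ∞) (iteratedDeriv l F) := contDiff_iteratedDeriv_inf F hF l
  have h4 : iteratedDeriv 4 ψ y = c * iteratedDeriv 4 (iteratedDeriv l F) y := by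
    rw [hψf, itd_const_mul c (iteratedDeriv l F) hgs 4]
  have hder : deriv ψ y = c * deriv (iteratedDeriv l F) y := by
    rw [hψf, deriv_const_mul _ (diff_of_inf _ hgs y)]
  have hk := key F hF hBF l y
  rw [h4, hder, hψ y]
  linear_combination c * hk
end

section
/- Generally, for each l ≥ 0 the polynomial ψ_l*(y) = (1/√(l!)) Σ_{j=0}^{⌊l/4⌋} (1/j!) D_y^{4j} y^l satisfies B* ψ_l* = −(l/4) ψ_l*, where B* u = −u⁗ − (1/4) y u'. -/
/-
Put `q j = D^(4j) y^l`. Then `D⁴ q j = q (j + 1)`, and `q j` is a multiple of `y^(l - 4j)`, so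
Euler's identity gives `y (q j)' = (l - 4j) q j`. Since `q (⌊l/4⌋ + 1) = 0`, shifting the index
turns `D⁴ ψ = ∑ q (j + 1) / j!` into `∑ j q j / j!`, and adding `(1/4) y ψ' = ∑ (l/4 - j) q j / j!`
leaves `(l/4) ψ`.
-/

open Finset
open scoped ContDiff Nat

section

variable {𝕜 : Type*} [NontriviallyNormedField 𝕜]

theorem iteratedDeriv_iteratedDeriv {F : Type*} [NormedAddCommGroup F] [NormedSpace 𝕜 F]
    (k m : ℕ) (f : 𝕜 → F) :
    iteratedDeriv k (iteratedDeriv m f) = iteratedDeriv (k + m) f := by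
  simp only [iteratedDeriv_eq_iterate, Function.iterate_add]
  rfl

theorem iteratedDeriv_sum_mul_iteratedDeriv {ι : Type*} {f : 𝕜 → 𝕜} (hf : ContDiff 𝕜 ∞ f)
    (s : Finset ι) (c : ι → 𝕜) (m : ι → ℕ) (k : ℕ) (y : 𝕜) :
    iteratedDeriv k (fun z => ∑ i ∈ s, c i * iteratedDeriv (m i) f z) y
      = ∑ i ∈ s, c i * iteratedDeriv (k + m i) f y := by
  rw [iteratedDeriv_fun_sum fun i _ => ?_]
  · simp only [iteratedDeriv_const_mul_field, iteratedDeriv_iteratedDeriv]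
  · rw [iteratedDeriv_eq_iterate]
    exact (contDiff_const.mul (hf.iterate_deriv (m i))).contDiffAt.of_le (mod_cast le_top)

theorem mul_iteratedDeriv_succ_pow (m n : ℕ) (y : 𝕜) :
    y * iteratedDeriv (n + 1) (· ^ m) y = (m - n) * iteratedDeriv n (· ^ m) y := by
  simp only [iteratedDeriv_pow, Nat.descFactorial_succ]
  rcases lt_or_ge n m with hnm | hmn
  · rw [Nat.cast_mul, Nat.cast_sub hnm.le, show m - n = m - (n + 1) + 1 by omega, pow_succ]
    ring
  · obtain rfl | hmn := hmn.eq_or_lt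
    · simp
    · simp [Nat.descFactorial_eq_zero_iff_lt.mpr hmn]

end

theorem sum_range_one_div_factorial_mul_succ (f : ℕ → ℝ) (N : ℕ) (hN : f N = 0) :
    ∑ j ∈ range N, 1 / j ! * f (j + 1) = ∑ j ∈ range N, j / j ! * f j := by
  have hlast : ∑ j ∈ range (N + 1), j / j ! * f j = ∑ j ∈ range N, j / j ! * f j := by
    rw [sum_range_succ, hN, mul_zero, add_zero]
  rw [← hlast, sum_range_succ', Nat.cast_zero, zero_div, zero_mul, add_zero]
  refine sum_congr rfl fun j _ => ?_
  rw [Nat.factorial_succ]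
  push_cast
  field_simp

/-- For each l ≥ 0, the polynomial ψ_l*(y) = (1/√(l!)) Σ_{j=0}^{⌊l/4⌋} (1/j!) D^{4j} y^l
satisfies B* ψ_l* = −(l/4) ψ_l*, where B* u = −u⁗ − (1/4) y u'. -/
theorem stmt_15 (l : ℕ) (ψ : ℝ → ℝ)
    (hψ : ∀ y : ℝ, ψ y = (1 / Real.sqrt (Nat.factorial l)) *
      ∑ j ∈ Finset.range (l / 4 + 1),
        (1 / (Nat.factorial j : ℝ)) * iteratedDeriv (4*j) (fun z : ℝ => z^l) y) :
    ∀ y : ℝ,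
      -(iteratedDeriv 4 ψ y) - (1/4) * y * deriv ψ y = -((l : ℝ)/4) * ψ y := by
  intro y
  set C : ℝ := 1 / Real.sqrt l !
  set N := l / 4 + 1
  have hψD (k : ℕ) : iteratedDeriv k ψ y
      = C * ∑ j ∈ range N, 1 / j ! * iteratedDeriv (k + 4 * j) (fun z : ℝ => z ^ l) y := by
    rw [funext hψ, iteratedDeriv_const_mul_field,
      iteratedDeriv_sum_mul_iteratedDeriv (contDiff_id.pow l)]
  have hD4 : iteratedDeriv 4 ψ y
      = C * ∑ j ∈ range N, j / j ! * iteratedDeriv (4 * j) (fun z : ℝ => z ^ l) y := by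
    rw [hψD, ← sum_range_one_div_factorial_mul_succ]
    · simp only [mul_add_one, add_comm]
    · simp [Nat.descFactorial_eq_zero_iff_lt.mpr (show l < 4 * N by omega)]
  have hEuler : y * deriv ψ y = C * ∑ j ∈ range N,
      1 / j ! * ((l - 4 * j) * iteratedDeriv (4 * j) (fun z : ℝ => z ^ l) y) := by
    rw [← iteratedDeriv_one, hψD, mul_left_comm, mul_sum]
    simp only [mul_left_comm y, add_comm 1, mul_iteratedDeriv_succ_pow, Nat.cast_mul,
      Nat.cast_ofNat]
  rw [mul_assoc, hEuler, hD4, hψ]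
  simp only [mul_sum, ← sum_neg_distrib, ← sum_sub_distrib]
  exact sum_congr rfl fun j _ => by ring
end
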